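/- arXiv:1409.6856 — 6 statements merged into one kernel-verified Lean document; each statement's English description precedes it below -/
import Mathlib

section
/- Every order embedding between posets is a regular monomorphism in the category of posets, i.e., it is an equalizer of some pair of monotone maps. -/
/-!
An order embedding `f : X → Y` is the equalizer of the two monotone maps `Y → Set Y` sending `y`
to `Iic y \ range f` and to `Iio y \ range f`: these differ only in whether they contain `y`,
so they agree at `y` exactly when `y ∈ range f`. A fork through them therefore lands in the range
of `f`, and lifts along `f` because `f` is an order isomorphism onto its range.
-/

open CategoryTheory Limits

/-- The underlying monotone map of a morphism of posets. -/
def homFn {X Y : PartOrd} (f : X ⟶ Y) : X →o Y := f.hom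

theorem Set.Iic_sdiff_eq_Iio_sdiff_iff {Y : Type*} [PartialOrder Y] {S : Set Y} {y : Y} :
    Set.Iic y \ S = Set.Iio y \ S ↔ y ∈ S := by
  refine ⟨fun h => ?_, fun hy => ?_⟩
  · by_contra hy
    have hy' : y ∈ Set.Iio y \ S := h ▸ ⟨le_rfl, hy⟩
    exact lt_irrefl y hy'.1
  · ext b
    simp only [Set.mem_sdiff, Set.mem_Iic, Set.mem_Iio, and_congr_left_iff]
    exact fun hb => ⟨fun hby => hby.lt_of_ne (by rintro rfl; exact hb hy), le_of_lt⟩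

namespace PartOrd

noncomputable def isLimitForkOfMapLEIff {X Y Z : PartOrd} {f : X ⟶ Y}
    (hf : ∀ a b, f a ≤ f b ↔ a ≤ b) {g h : Y ⟶ Z} (w : f ≫ g = f ≫ h)
    (hrange : ∀ y, g y = h y → y ∈ Set.range f) : IsLimit (Fork.ofι f w) := by
  let e : X ↪o Y := OrderEmbedding.ofMapLEIff f hf
  have hmem (s : Fork g h) (z : s.pt) : s.ι z ∈ Set.range e :=
    hrange _ (ConcreteCategory.congr_hom s.condition z)
  let lift (s : Fork g h) : s.pt →o X :=
    ⟨fun z => e.orderIso.symm ⟨s.ι z, hmem s z⟩,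
      fun _ _ hww' => e.orderIso.symm.monotone (s.ι.hom.monotone hww')⟩
  have hlift (s : Fork g h) (z : s.pt) : f (lift s z) = s.ι z :=
    congrArg Subtype.val (e.orderIso.apply_symm_apply ⟨s.ι z, hmem s z⟩)
  refine Fork.IsLimit.mk _ (fun s => ofHom (lift s)) (fun s => ext (hlift s))
    (fun s m hm => ext fun z => e.injective ?_)
  exact (ConcreteCategory.congr_hom hm z).trans (hlift s z).symm

end PartOrd

/-- Every order embedding between posets is a regular monomorphism in the
category of posets: it is an equalizer of some pair of monotone maps. -/
theorem stmt_5 {X Y : PartOrd} (f : X ⟶ Y)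
    (hemb : ∀ x y : X, x ≤ y ↔ homFn f x ≤ homFn f y) :
    Nonempty (RegularMono f) := by
  let g : Y ⟶ PartOrd.of (Set Y) := PartOrd.ofHom
    ⟨fun y => Set.Iic y \ Set.range f,
      fun _ _ hyy' => Set.sdiff_subset_sdiff_left (Set.Iic_subset_Iic.mpr hyy')⟩
  let h : Y ⟶ PartOrd.of (Set Y) := PartOrd.ofHom
    ⟨fun y => Set.Iio y \ Set.range f,
      fun _ _ hyy' => Set.sdiff_subset_sdiff_left (Set.Iio_subset_Iio hyy')⟩
  have w : f ≫ g = f ≫ h := PartOrd.ext fun x => Set.Iic_sdiff_eq_Iio_sdiff_iff.mpr ⟨x, rfl⟩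
  exact ⟨⟨_, g, h, w, PartOrd.isLimitForkOfMapLEIff (fun a b => (hemb a b).symm) w
    fun _ => Set.Iic_sdiff_eq_Iio_sdiff_iff.mp⟩⟩
end

section
/- Strict order embeddings are stable under pullback in Posets: if f : (P₂,≤₂) → (P₀,≤₀) is a strict order embedding and g : (P₁,≤₁) → (P₀,≤₀) is any monotone map, then the pullback projection f' : (P₃,≤₃) → (P₁,≤₁) is a strict order embedding, where P₃ = {(x₁,x₂) | g(x₁) = f(x₂)} with componentwise order. -/
/-- A strict order embedding: a monotone map reflecting the order such that
every element lying between two images is itself an image. -/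
def StrictOrderEmbedding {P P' : Type} [PartialOrder P] [PartialOrder P']
    (f : P → P') : Prop :=
  Monotone f ∧ (∀ x y : P, x ≤ y ↔ f x ≤ f y) ∧
    (∀ x y : P, ∀ z' : P', f x ≤ z' → z' ≤ f y → ∃ z : P, f z = z')

section
variable {P₀ P₁ P₂ : Type} [PartialOrder P₀] [PartialOrder P₁] [PartialOrder P₂]
  (g : P₁ →o P₀) (f : P₂ →o P₀)

/-- The pullback poset: the equalizing subset of the product with the
componentwise order. -/
def Pb : Type := {p : P₁ × P₂ // g p.1 = f p.2}

instance : PartialOrder (Pb g f) := Subtype.partialOrder _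

/-- The pullback projection opposite to `f`. -/
def pbFst : Pb g f →o P₁ := ⟨fun p => p.val.1, fun _ _ h => h.1⟩

/-- Strict order embeddings are stable under pullback in the category of
posets: if `f` is a strict order embedding, so is the pullback projection
`f' : P₃ → P₁`. -/
theorem stmt_10 (hf : StrictOrderEmbedding (f : P₂ → P₀)) :
    StrictOrderEmbedding (pbFst g f : Pb g f → P₁) := by
  obtain ⟨hmono, hrefl, hfill⟩ := hf
  refine ⟨(pbFst g f).monotone, ?_, ?_⟩
  · intro x y
    constructor
    · exact fun h => h.1
    · intro h
      refine ⟨h, (hrefl x.val.2 y.val.2).2 ?_⟩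
      rw [← x.property, ← y.property]
      exact g.monotone h
  · intro x y z₁ hx hy
    obtain ⟨z₂, hz₂⟩ := hfill x.val.2 y.val.2 (g z₁)
      (by rw [← x.property]; exact g.monotone hx)
      (by rw [← y.property]; exact g.monotone hy)
    exact ⟨⟨(z₁, z₂), hz₂.symm⟩, rfl⟩

end
end

section
/- Given a span of monotone maps f : (P₀,≤₀) → (P₁,≤₁) and g : (P₀,≤₀) → (P₂,≤₂) where f is a strict order embedding, let P₃ with maps g' : P₁ → P₃ and f' : P₂ → P₃ be the pushout of the underlying functions in Set, and let ≤₃ be the transitive closure of {(x₃,y₃) | ∃ x₁ ≤₁ y₁ with g'(x₁)=x₃, g'(y₁)=y₃, or ∃ x₂ ≤₂ y₂ with f'(x₂)=x₃, f'(y₂)=y₃}. Then ≤₃ is a partial order and ((P₃,≤₃), g', f') is a pushout of the span in the category of posets. -/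
/-- The relation on the set-pushout generated by the orders of the two legs. -/
def pushoutRel {P₁ P₂ P₃ : Type} [PartialOrder P₁] [PartialOrder P₂]
    (g' : P₁ → P₃) (f' : P₂ → P₃) (x₃ y₃ : P₃) : Prop :=
  (∃ x₁ y₁ : P₁, x₁ ≤ y₁ ∧ g' x₁ = x₃ ∧ g' y₁ = y₃) ∨
  (∃ x₂ y₂ : P₂, x₂ ≤ y₂ ∧ f' x₂ = x₃ ∧ f' y₂ = y₃)

/-- Explicit order relation on the concrete model of the pushout. -/
def concreteLe {P₀ P₁ P₂ : Type} [PartialOrder P₁] [PartialOrder P₂]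
    (f : P₀ → P₁) (g : P₀ → P₂) :
    (P₂ ⊕ {x : P₁ // x ∉ Set.range f}) → (P₂ ⊕ {x : P₁ // x ∉ Set.range f}) → Prop
  | Sum.inl a, Sum.inl b => a ≤ b
  | Sum.inl a, Sum.inr y => ∃ c, a ≤ g c ∧ f c ≤ y.1
  | Sum.inr x, Sum.inl b => ∃ c, x.1 ≤ f c ∧ g c ≤ b
  | Sum.inr x, Sum.inr y => x.1 ≤ y.1 ∨ ∃ c d, x.1 ≤ f c ∧ g c ≤ g d ∧ f d ≤ y.1

theorem concreteLe_trans {P₀ P₁ P₂ : Type}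
    [PartialOrder P₀] [PartialOrder P₁] [PartialOrder P₂]
    (f : P₀ → P₁) (g : P₀ → P₂) (hg_mono : Monotone g)
    (hrefl : ∀ x y : P₀, x ≤ y ↔ f x ≤ f y)
    (hconv : ∀ x y : P₀, ∀ z' : P₁, f x ≤ z' → z' ≤ f y → ∃ z : P₀, f z = z')
    (u v w : P₂ ⊕ {x : P₁ // x ∉ Set.range f})
    (huv : concreteLe f g u v) (hvw : concreteLe f g v w) :
    concreteLe f g u w := by
  rcases u with a | x <;> rcases v with b | y <;> rcases w with c | z <;>
      simp only [concreteLe] at *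
  · exact le_trans huv hvw
  · obtain ⟨e, h1, h2⟩ := hvw
    exact ⟨e, le_trans huv h1, h2⟩
  · -- inl a ≤ inr y ≤ inl c : impossible since y ∉ range f
    obtain ⟨e, h1, h2⟩ := huv
    obtain ⟨e', h1', h2'⟩ := hvw
    exact absurd (hconv e e' y.1 h2 h1') y.2
  · obtain ⟨e, h1, h2⟩ := huv
    rcases hvw with h | ⟨c', d', hc', hd', he'⟩
    · exact ⟨e, h1, le_trans h2 h⟩
    · refine ⟨d', le_trans h1 ?_, he'⟩
      exact le_trans (hg_mono ((hrefl e c').2 (le_trans h2 hc'))) hd'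
  · obtain ⟨e, h1, h2⟩ := huv
    exact ⟨e, h1, le_trans h2 hvw⟩
  · obtain ⟨e, h1, h2⟩ := huv
    obtain ⟨e', h1', h2'⟩ := hvw
    exact Or.inr ⟨e, e', h1, le_trans h2 h1', h2'⟩
  · rcases huv with h | ⟨c', d', hc', hd', he'⟩
    · obtain ⟨e, h1, h2⟩ := hvw
      exact ⟨e, le_trans h h1, h2⟩
    · obtain ⟨e, h1, h2⟩ := hvw
      refine ⟨c', hc', le_trans hd' (le_trans ?_ h2)⟩
      exact hg_mono ((hrefl d' e).2 (le_trans he' h1))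
  · rcases huv with h | ⟨c', d', hc', hd', he'⟩
    · rcases hvw with h' | ⟨c'', d'', hc'', hd'', he''⟩
      · exact Or.inl (le_trans h h')
      · exact Or.inr ⟨c'', d'', le_trans h hc'', hd'', he''⟩
    · rcases hvw with h' | ⟨c'', d'', hc'', hd'', he''⟩
      · exact Or.inr ⟨c', d', hc', hd', le_trans he' h'⟩
      · refine Or.inr ⟨c', d'', hc', ?_, he''⟩
        exact le_trans hd' (le_trans (hg_mono ((hrefl d' c'').2 (le_trans he' hc''))) hd'')

theorem concreteLe_antisymm {P₀ P₁ P₂ : Type}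
    [PartialOrder P₀] [PartialOrder P₁] [PartialOrder P₂]
    (f : P₀ → P₁) (g : P₀ → P₂)
    (hconv : ∀ x y : P₀, ∀ z' : P₁, f x ≤ z' → z' ≤ f y → ∃ z : P₀, f z = z')
    (u v : P₂ ⊕ {x : P₁ // x ∉ Set.range f})
    (huv : concreteLe f g u v) (hvu : concreteLe f g v u) : u = v := by
  rcases u with a | x <;> rcases v with b | y <;> simp only [concreteLe] at *
  · exact congrArg Sum.inl (le_antisymm huv hvu)
  · obtain ⟨e, h1, h2⟩ := huv
    obtain ⟨e', h1', h2'⟩ := hvu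
    exact absurd (hconv e e' y.1 h2 h1') y.2
  · obtain ⟨e, h1, h2⟩ := huv
    obtain ⟨e', h1', h2'⟩ := hvu
    exact absurd (hconv e' e x.1 h2' h1) x.2
  · rcases huv with h | ⟨c, d, hc, hd, he⟩
    · rcases hvu with h' | ⟨c', d', hc', hd', he'⟩
      · exact congrArg Sum.inr (Subtype.ext (le_antisymm h h'))
      · exact absurd (hconv d' c' x.1 he' (le_trans h hc')) x.2
    · rcases hvu with h' | ⟨c', d', hc', hd', he'⟩
      · exact absurd (hconv d c x.1 (le_trans he h') hc) x.2
      · exact absurd (hconv d' c x.1 he' hc) x.2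

/-- Given a span of monotone maps `f : P₀ → P₁`, `g : P₀ → P₂` with `f` a
strict order embedding, and a pushout `(P₃, g', f')` of the underlying
functions in `Set`, the transitive closure of the relation generated by the
orders of `P₁` and `P₂` is a partial order on `P₃`, and `(P₃, g', f')` with
this order is a pushout of the span in the category of posets. -/
theorem stmt_12 {P₀ P₁ P₂ P₃ : Type}
    [PartialOrder P₀] [PartialOrder P₁] [PartialOrder P₂]
    (f : P₀ → P₁) (g : P₀ → P₂) (hf_mono : Monotone f) (hg_mono : Monotone g)
    (hf : StrictOrderEmbedding f)
    (g' : P₁ → P₃) (f' : P₂ → P₃)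
    -- (P₃, g', f') is a pushout of the underlying functions in Set:
    (hcomm : g' ∘ f = f' ∘ g)
    (huniv : ∀ (Q : Type) (u : P₁ → Q) (v : P₂ → Q), u ∘ f = v ∘ g →
      ∃! h : P₃ → Q, h ∘ g' = u ∧ h ∘ f' = v) :
    -- the transitive closure of the generated relation:
    (IsPartialOrder P₃ (Relation.TransGen (pushoutRel g' f'))) ∧
    -- g' and f' are monotone w.r.t. this order:
    (∀ x₁ y₁ : P₁, x₁ ≤ y₁ → Relation.TransGen (pushoutRel g' f') (g' x₁) (g' y₁)) ∧
    (∀ x₂ y₂ : P₂, x₂ ≤ y₂ → Relation.TransGen (pushoutRel g' f') (f' x₂) (f' y₂)) ∧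
    -- (P₃, ≤₃) with g', f' is a pushout in the category of posets:
    (∀ (P₄ : Type) (_ : PartialOrder P₄) (g'' : P₁ → P₄) (f'' : P₂ → P₄),
      Monotone g'' → Monotone f'' → g'' ∘ f = f'' ∘ g →
      ∃! h : P₃ → P₄,
        (∀ x₃ y₃ : P₃, Relation.TransGen (pushoutRel g' f') x₃ y₃ → h x₃ ≤ h y₃) ∧
        h ∘ g' = g'' ∧ h ∘ f' = f'') := by
  classical
  obtain ⟨hmono, hrefl, hconv⟩ := hf
  have hfinj : Function.Injective f := by
    intro a b hab
    exact le_antisymm ((hrefl a b).2 hab.le) ((hrefl b a).2 hab.ge)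
  set C := P₂ ⊕ {x : P₁ // x ∉ Set.range f} with hCdef
  -- the concrete leg from P₁
  let G : P₁ → C := fun x =>
    if h : x ∈ Set.range f then Sum.inl (g h.choose) else Sum.inr ⟨x, h⟩
  have hGf : ∀ c : P₀, G (f c) = Sum.inl (g c) := by
    intro c
    have h : f c ∈ Set.range f := ⟨c, rfl⟩
    simp only [G, dif_pos h]
    exact congrArg Sum.inl (congrArg g (hfinj h.choose_spec))
  have hGn : ∀ (x : P₁) (hx : x ∉ Set.range f), G x = Sum.inr ⟨x, hx⟩ := by
    intro x hx
    simp only [G, dif_neg hx]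
  -- the map back from the concrete pushout
  let k : C → P₃ := Sum.elim f' (fun x => g' x.1)
  have hkG : ∀ x : P₁, k (G x) = g' x := by
    intro x
    by_cases hx : x ∈ Set.range f
    · obtain ⟨c, rfl⟩ := hx
      rw [hGf c]
      exact (congrFun hcomm c).symm
    · rw [hGn x hx]
      exact rfl
  -- the comparison map h₃ : P₃ → C
  have hGcomm : G ∘ f = Sum.inl ∘ g := funext fun c => hGf c
  obtain ⟨h₃, ⟨hh₃g, hh₃f⟩, -⟩ := huniv C G Sum.inl hGcomm
  have hh₃g' : ∀ x : P₁, h₃ (g' x) = G x := fun x => congrFun hh₃g x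
  have hh₃f' : ∀ a : P₂, h₃ (f' a) = Sum.inl a := fun a => congrFun hh₃f a
  have hhk : ∀ u : C, h₃ (k u) = u := by
    intro u
    rcases u with a | x
    · exact hh₃f' a
    · rw [show k (Sum.inr x) = g' x.1 from rfl, hh₃g' x.1, hGn x.1 x.2]
  have hkh : ∀ p : P₃, k (h₃ p) = p := by
    obtain ⟨h₀, -, huniq⟩ := huniv P₃ g' f' hcomm
    have h1 : k ∘ h₃ = h₀ := by
      refine huniq _ ⟨?_, ?_⟩
      · funext x; exact hkG x ▸ congrArg k (congrFun hh₃g x)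
      · funext a
        show k (h₃ (f' a)) = f' a
        rw [hh₃f' a]
        exact rfl
    have h2 : id = h₀ := huniq _ ⟨by funext x; rfl, by funext a; rfl⟩
    intro p
    exact congrFun (h1.trans h2.symm) p
  -- one basic step maps to the concrete relation
  have hstep : ∀ p q : P₃, pushoutRel g' f' p q → concreteLe f g (h₃ p) (h₃ q) := by
    rintro p q (⟨x₁, y₁, hxy, rfl, rfl⟩ | ⟨x₂, y₂, hxy, rfl, rfl⟩)
    · rw [hh₃g' x₁, hh₃g' y₁]
      by_cases hx : x₁ ∈ Set.range f <;> by_cases hy : y₁ ∈ Set.range f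
      · obtain ⟨c, rfl⟩ := hx; obtain ⟨d, rfl⟩ := hy
        rw [hGf c, hGf d]
        exact hg_mono ((hrefl c d).2 hxy)
      · obtain ⟨c, rfl⟩ := hx
        rw [hGf c, hGn y₁ hy]
        exact ⟨c, le_refl _, hxy⟩
      · obtain ⟨d, rfl⟩ := hy
        rw [hGn x₁ hx, hGf d]
        exact ⟨d, hxy, le_refl _⟩
      · rw [hGn x₁ hx, hGn y₁ hy]
        exact Or.inl hxy
    · rw [hh₃f' x₂, hh₃f' y₂]
      exact hxy
  have hTG : ∀ p q : P₃, Relation.TransGen (pushoutRel g' f') p q →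
      concreteLe f g (h₃ p) (h₃ q) := by
    intro p q h
    induction h with
    | single h => exact hstep _ _ h
    | tail _ h ih => exact concreteLe_trans f g hg_mono hrefl hconv _ _ _ ih (hstep _ _ h)
  -- concrete relation maps back into the transitive closure
  have hback : ∀ u v : C, concreteLe f g u v →
      Relation.TransGen (pushoutRel g' f') (k u) (k v) := by
    intro u v huv
    rcases u with a | x <;> rcases v with b | y <;> simp only [concreteLe] at huv
    · exact Relation.TransGen.single (Or.inr ⟨a, b, huv, rfl, rfl⟩)
    · obtain ⟨c, h1, h2⟩ := huv
      refine Relation.TransGen.head (Or.inr ⟨a, g c, h1, rfl, rfl⟩)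
        (Relation.TransGen.single (Or.inl ⟨f c, y.1, h2, congrFun hcomm c, rfl⟩))
    · obtain ⟨c, h1, h2⟩ := huv
      refine Relation.TransGen.head (Or.inl ⟨x.1, f c, h1, rfl, congrFun hcomm c⟩)
        (Relation.TransGen.single (Or.inr ⟨g c, b, h2, rfl, rfl⟩))
    · rcases huv with h | ⟨c, d, h1, h2, h3⟩
      · exact Relation.TransGen.single (Or.inl ⟨x.1, y.1, h, rfl, rfl⟩)
      · refine Relation.TransGen.head (Or.inl ⟨x.1, f c, h1, rfl, congrFun hcomm c⟩)
          (Relation.TransGen.head (Or.inr ⟨g c, g d, h2, rfl, rfl⟩)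
            (Relation.TransGen.single (Or.inl ⟨f d, y.1, h3, congrFun hcomm d, rfl⟩)))
  -- every element of P₃ is an image
  have hsurj : ∀ p : P₃, (∃ a, f' a = p) ∨ (∃ x, g' x = p) := by
    intro p
    have hp := hkh p
    rcases hu : h₃ p with a | x
    · rw [hu] at hp
      exact Or.inl ⟨a, hp⟩
    · rw [hu] at hp
      exact Or.inr ⟨x.1, hp⟩
  refine ⟨?_, ?_, ?_, ?_⟩
  · refine { refl := ?_, trans := fun _ _ _ => Relation.TransGen.trans, antisymm := ?_ }
    · intro p
      rcases hsurj p with ⟨a, rfl⟩ | ⟨x, rfl⟩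
      · exact Relation.TransGen.single (Or.inr ⟨a, a, le_refl a, rfl, rfl⟩)
      · exact Relation.TransGen.single (Or.inl ⟨x, x, le_refl x, rfl, rfl⟩)
    · intro p q hpq hqp
      have h := concreteLe_antisymm f g hconv _ _ (hTG p q hpq) (hTG q p hqp)
      calc p = k (h₃ p) := (hkh p).symm
        _ = k (h₃ q) := congrArg k h
        _ = q := hkh q
  · intro x₁ y₁ h
    exact Relation.TransGen.single (Or.inl ⟨x₁, y₁, h, rfl, rfl⟩)
  · intro x₂ y₂ h
    exact Relation.TransGen.single (Or.inr ⟨x₂, y₂, h, rfl, rfl⟩)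
  · intro P₄ _ g'' f'' hg'' hf'' hcomm₄
    obtain ⟨h₄, ⟨h1, h2⟩, huniq⟩ := huniv P₄ g'' f'' hcomm₄
    have hstep₄ : ∀ p q : P₃, pushoutRel g' f' p q → h₄ p ≤ h₄ q := by
      rintro p q (⟨x₁, y₁, hxy, rfl, rfl⟩ | ⟨x₂, y₂, hxy, rfl, rfl⟩)
      · rw [show h₄ (g' x₁) = g'' x₁ from congrFun h1 x₁,
          show h₄ (g' y₁) = g'' y₁ from congrFun h1 y₁]
        exact hg'' hxy
      · rw [show h₄ (f' x₂) = f'' x₂ from congrFun h2 x₂,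
          show h₄ (f' y₂) = f'' y₂ from congrFun h2 y₂]
        exact hf'' hxy
    refine ⟨h₄, ⟨?_, h1, h2⟩, ?_⟩
    · intro p q h
      induction h with
      | single h => exact hstep₄ _ _ h
      | tail _ h ih => exact le_trans ih (hstep₄ _ _ h)
    · intro h' ⟨_, ha, hb⟩
      exact huniq h' ⟨ha, hb⟩
end

section
/- Strict order embeddings are stable under pushout in Posets: in a pushout square in the category of posets with f : (P₀,≤₀) → (P₁,≤₁) a strict order embedding and g : (P₀,≤₀) → (P₂,≤₂) an arbitrary monotone map, the opposite pushout morphism f' : (P₂,≤₂) → (P₃,≤₃) is again a strict order embedding. -/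
open CategoryTheory Limits

/-- A morphism of posets that is a strict order embedding. -/
def IsM {X Y : PartOrd} (f : X ⟶ Y) : Prop := StrictOrderEmbedding ⇑(homFn f)

/-!
Since `f` reflects the order and its image is convex, the pushout of `f` and `g` has an explicit
model: the disjoint union of `P₂` and `P₁ ∖ f(P₀)`, ordered by the orders of `P₁` and `P₂`
together with comparisons that make one detour through the image of `f`. Longer zigzags collapse,
because an element of `P₁` between two points of the image of `f` is itself in that image. In this
model `P₂` is visibly a convex, order-reflecting part, and every pushout is isomorphic to it.
-/

namespace StrictOrderEmbedding

variable {A B C : Type} [PartialOrder A] [PartialOrder B] [PartialOrder C] {f : A → B}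

theorem comp {h : B → C} (hh : StrictOrderEmbedding h) (hf : StrictOrderEmbedding f) :
    StrictOrderEmbedding (h ∘ f) := by
  refine ⟨hh.1.comp hf.1, fun x y => (hf.2.1 x y).trans (hh.2.1 _ _), fun x y c hx hy => ?_⟩
  obtain ⟨b, rfl⟩ := hh.2.2 _ _ c hx hy
  obtain ⟨a, rfl⟩ := hf.2.2 x y b ((hh.2.1 _ _).2 hx) ((hh.2.1 _ _).2 hy)
  exact ⟨a, rfl⟩

theorem _root_.OrderIso.strictOrderEmbedding (e : B ≃o C) : StrictOrderEmbedding e :=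
  ⟨e.monotone, fun _ _ => e.le_iff_le.symm, fun _ _ c _ _ => e.surjective c⟩

theorem injective (hf : StrictOrderEmbedding f) : Function.Injective f :=
  fun x y h => le_antisymm ((hf.2.1 x y).2 h.le) ((hf.2.1 y x).2 h.ge)

theorem mem_range_of_le_of_le (hf : StrictOrderEmbedding f) {a a' : A} {b : B}
    (ha : f a ≤ b) (ha' : b ≤ f a') : b ∈ Set.range f :=
  hf.2.2 a a' b ha ha'

theorem map_le_of_map_le (hf : StrictOrderEmbedding f) (g : A →o C) {a a' : A}
    (h : f a ≤ f a') : g a ≤ g a' :=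
  g.monotone ((hf.2.1 a a').2 h)

def Pushout (_hf : StrictOrderEmbedding f) (_g : A →o C) : Type :=
  C ⊕ {b : B // b ∉ Set.range f}

variable (hf : StrictOrderEmbedding f) (g : A →o C)

protected def Pushout.Le : hf.Pushout g → hf.Pushout g → Prop
  | Sum.inl c, Sum.inl c' => c ≤ c'
  | Sum.inl c, Sum.inr b => ∃ a, c ≤ g a ∧ f a ≤ b.1
  | Sum.inr b, Sum.inl c => ∃ a, b.1 ≤ f a ∧ g a ≤ c
  | Sum.inr b, Sum.inr b' => b.1 ≤ b'.1 ∨ ∃ a a', b.1 ≤ f a ∧ g a ≤ g a' ∧ f a' ≤ b'.1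

theorem Pushout.le_trans {x y z : hf.Pushout g} (hxy : Pushout.Le hf g x y)
    (hyz : Pushout.Le hf g y z) : Pushout.Le hf g x z := by
  match x, y, z, hxy, hyz with
  | Sum.inl _, Sum.inl _, Sum.inl _, hxy, hyz => exact hxy.trans hyz
  | Sum.inl _, Sum.inl _, Sum.inr _, hxy, ⟨a, h₁, h₂⟩ => exact ⟨a, hxy.trans h₁, h₂⟩
  | Sum.inl _, Sum.inr b, Sum.inl _, ⟨_, _, h₁⟩, ⟨_, h₂, _⟩ =>
    exact absurd (hf.mem_range_of_le_of_le h₁ h₂) b.2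
  | Sum.inl _, Sum.inr _, Sum.inr _, ⟨a, h₁, h₂⟩, .inl h => exact ⟨a, h₁, h₂.trans h⟩
  | Sum.inl _, Sum.inr b, Sum.inr _, ⟨_, _, h₁⟩, .inr ⟨_, _, h₂, _⟩ =>
    exact absurd (hf.mem_range_of_le_of_le h₁ h₂) b.2
  | Sum.inr _, Sum.inl _, Sum.inl _, ⟨a, h₁, h₂⟩, hyz => exact ⟨a, h₁, h₂.trans hyz⟩
  | Sum.inr _, Sum.inl _, Sum.inr _, ⟨a, h₁, h₂⟩, ⟨a', h₃, h₄⟩ =>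
    exact .inr ⟨a, a', h₁, h₂.trans h₃, h₄⟩
  | Sum.inr _, Sum.inr _, Sum.inl _, .inl h, ⟨a, h₁, h₂⟩ => exact ⟨a, h.trans h₁, h₂⟩
  | Sum.inr _, Sum.inr _, Sum.inl _, .inr ⟨a, _, h₁, h₂, h₃⟩, ⟨_, h₄, h₅⟩ =>
    exact ⟨a, h₁, h₂.trans ((hf.map_le_of_map_le g (h₃.trans h₄)).trans h₅)⟩
  | Sum.inr _, Sum.inr _, Sum.inr _, .inl h, .inl h' => exact .inl (h.trans h')
  | Sum.inr _, Sum.inr _, Sum.inr _, .inl h, .inr ⟨a, a', h₁, h₂, h₃⟩ =>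
    exact .inr ⟨a, a', h.trans h₁, h₂, h₃⟩
  | Sum.inr _, Sum.inr _, Sum.inr _, .inr ⟨a, a', h₁, h₂, h₃⟩, .inl h =>
    exact .inr ⟨a, a', h₁, h₂, h₃.trans h⟩
  | Sum.inr _, Sum.inr _, Sum.inr _, .inr ⟨a, _, h₁, h₂, h₃⟩, .inr ⟨_, a', h₄, h₅, h₆⟩ =>
    exact .inr ⟨a, a', h₁, h₂.trans ((hf.map_le_of_map_le g (h₃.trans h₄)).trans h₅), h₆⟩

theorem Pushout.le_antisymm {x y : hf.Pushout g} (hxy : Pushout.Le hf g x y)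
    (hyx : Pushout.Le hf g y x) : x = y := by
  match x, y, hxy, hyx with
  | Sum.inl _, Sum.inl _, hxy, hyx => exact congrArg Sum.inl (hxy.antisymm hyx)
  | Sum.inl _, Sum.inr b, ⟨_, _, h₁⟩, ⟨_, h₂, _⟩ =>
    exact absurd (hf.mem_range_of_le_of_le h₁ h₂) b.2
  | Sum.inr b, Sum.inl _, ⟨_, h₂, _⟩, ⟨_, _, h₁⟩ =>
    exact absurd (hf.mem_range_of_le_of_le h₁ h₂) b.2
  | Sum.inr _, Sum.inr _, .inl h, .inl h' => exact congrArg Sum.inr (Subtype.ext (h.antisymm h'))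
  | Sum.inr b, Sum.inr _, .inl h, .inr ⟨_, _, h₁, _, h₂⟩ =>
    exact absurd (hf.mem_range_of_le_of_le h₂ (h.trans h₁)) b.2
  | Sum.inr _, Sum.inr b', .inr ⟨_, _, h₁, _, h₂⟩, .inl h =>
    exact absurd (hf.mem_range_of_le_of_le h₂ (h.trans h₁)) b'.2
  | Sum.inr _, Sum.inr b', .inr ⟨_, _, _, _, h₂⟩, .inr ⟨_, _, h₃, _, _⟩ =>
    exact absurd (hf.mem_range_of_le_of_le h₂ h₃) b'.2

instance : PartialOrder (hf.Pushout g) where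
  le := Pushout.Le hf g
  le_refl
    | Sum.inl c => le_refl c
    | Sum.inr b => .inl (le_refl b.1)
  le_trans _ _ _ := Pushout.le_trans hf g
  le_antisymm _ _ := Pushout.le_antisymm hf g

namespace Pushout

/-- Named after the legs of `IsPushout f g inl inr`, hence opposite to the `Sum` constructors. -/
def inr : C →o hf.Pushout g := ⟨Sum.inl, fun _ _ h => h⟩

theorem strictOrderEmbedding_inr : StrictOrderEmbedding (inr hf g) := by
  refine ⟨(inr hf g).monotone, fun _ _ => Iff.rfl, fun _ _ q hc hc' => ?_⟩
  match q, hc, hc' with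
  | Sum.inl c, _, _ => exact ⟨c, rfl⟩
  | Sum.inr b, ⟨_, _, h₁⟩, ⟨_, h₂, _⟩ => exact absurd (hf.mem_range_of_le_of_le h₁ h₂) b.2

open Classical in
noncomputable def inlFun (b : B) : hf.Pushout g :=
  if h : ∃ a, f a = b then Sum.inl (g h.choose) else Sum.inr ⟨b, h⟩

theorem inlFun_map (a : A) : inlFun hf g (f a) = Sum.inl (g a) := by
  have h : ∃ a', f a' = f a := ⟨a, rfl⟩
  have : inlFun hf g (f a) = Sum.inl (g h.choose) := dif_pos h
  rw [this, hf.injective h.choose_spec]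

theorem inlFun_of_notMem {b : B} (hb : b ∉ Set.range f) : inlFun hf g b = Sum.inr ⟨b, hb⟩ :=
  dif_neg hb

theorem monotone_inlFun : Monotone (inlFun hf g) := by
  intro b b' hb
  by_cases h : b ∈ Set.range f <;> by_cases h' : b' ∈ Set.range f
  · obtain ⟨a, rfl⟩ := h
    obtain ⟨a', rfl⟩ := h'
    rw [inlFun_map, inlFun_map]
    exact hf.map_le_of_map_le g hb
  · obtain ⟨a, rfl⟩ := h
    rw [inlFun_map, inlFun_of_notMem hf g h']
    exact ⟨a, le_rfl, hb⟩
  · obtain ⟨a', rfl⟩ := h'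
    rw [inlFun_map, inlFun_of_notMem hf g h]
    exact ⟨a', hb, le_rfl⟩
  · rw [inlFun_of_notMem hf g h, inlFun_of_notMem hf g h']
    exact Or.inl hb

noncomputable def inl : B →o hf.Pushout g := ⟨inlFun hf g, monotone_inlFun hf g⟩

theorem inl_comp_eq : (inl hf g).comp ⟨f, hf.1⟩ = (inr hf g).comp g :=
  OrderHom.ext _ _ (funext (inlFun_map hf g))

variable {g} {D : Type} [PartialOrder D] (u : B →o D) (v : C →o D)
  (huv : ∀ a, u (f a) = v (g a))

def desc : hf.Pushout g →o D where
  toFun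
    | Sum.inl c => v c
    | Sum.inr b => u b.1
  monotone'
    | Sum.inl _, Sum.inl _, h => v.monotone h
    | Sum.inl _, Sum.inr _, ⟨a, h₁, h₂⟩ =>
      (v.monotone h₁).trans ((huv a).symm.trans_le (u.monotone h₂))
    | Sum.inr _, Sum.inl _, ⟨a, h₁, h₂⟩ =>
      (u.monotone h₁).trans ((huv a).trans_le (v.monotone h₂))
    | Sum.inr _, Sum.inr _, .inl h => u.monotone h
    | Sum.inr _, Sum.inr _, .inr ⟨a, a', h₁, h₂, h₃⟩ => calc
        _ ≤ u (f a) := u.monotone h₁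
        _ = v (g a) := huv a
        _ ≤ v (g a') := v.monotone h₂
        _ = u (f a') := (huv a').symm
        _ ≤ _ := u.monotone h₃

theorem desc_comp_inl : (desc hf u v huv).comp (inl hf g) = u := by
  ext b
  by_cases hb : b ∈ Set.range f
  · obtain ⟨a, rfl⟩ := hb
    show desc hf u v huv (inlFun hf g (f a)) = u (f a)
    rw [inlFun_map]
    exact (huv a).symm
  · show desc hf u v huv (inlFun hf g b) = u b
    rw [inlFun_of_notMem hf g hb]
    rfl

end Pushout

end StrictOrderEmbedding

namespace IsM

variable {P₀ P₁ P₂ : PartOrd.{0}}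

theorem comp {f : P₀ ⟶ P₁} {h : P₁ ⟶ P₂} (hf : IsM f) (hh : IsM h) : IsM (f ≫ h) :=
  show StrictOrderEmbedding (homFn h ∘ homFn f) from StrictOrderEmbedding.comp hh hf

theorem iso_hom (e : P₁ ≅ P₂) : IsM e.hom :=
  (OrderIso.ofHomInv (homFn e.hom) (homFn e.inv) (congrArg PartOrd.Hom.hom e.inv_hom_id)
    (congrArg PartOrd.Hom.hom e.hom_inv_id)).strictOrderEmbedding

end IsM

namespace StrictOrderEmbedding

variable {P₀ P₁ P₂ : PartOrd.{0}} {f : P₀ ⟶ P₁} (hf : StrictOrderEmbedding (homFn f))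
  (g : P₀ ⟶ P₂)

noncomputable def pushoutCocone : PushoutCocone f g :=
  PushoutCocone.mk (W := PartOrd.of (hf.Pushout (homFn g)))
    (PartOrd.ofHom (Pushout.inl hf (homFn g)))
    (PartOrd.ofHom (Pushout.inr hf (homFn g)))
    (congrArg PartOrd.ofHom (Pushout.inl_comp_eq hf (homFn g)))

noncomputable def isColimitPushoutCocone : IsColimit (hf.pushoutCocone g) :=
  PushoutCocone.IsColimit.mk _
    (fun s => PartOrd.ofHom (Pushout.desc hf s.inl.hom s.inr.hom
      (fun a => congrArg (fun k => homFn k a) s.condition)))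
    (fun s => congrArg PartOrd.ofHom (Pushout.desc_comp_inl hf _ _
      (fun a => congrArg (fun k => homFn k a) s.condition)))
    (fun _ => rfl)
    (fun _ m hl hr => by
      ext (c | b)
      · exact congrArg (fun k => homFn k c) hr
      · exact (congrArg m.hom (Pushout.inlFun_of_notMem hf (homFn g) b.2).symm).trans
          (congrArg (fun k => homFn k b.1) hl))

end StrictOrderEmbedding

/-- Strict order embeddings are stable under pushout in the category of
posets: in a pushout square with one leg a strict order embedding, the
opposite pushout morphism is again a strict order embedding. -/
theorem stmt_13 {P₀ P₁ P₂ P₃ : PartOrd} (f : P₀ ⟶ P₁) (g : P₀ ⟶ P₂)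
    (g' : P₁ ⟶ P₃) (f' : P₂ ⟶ P₃)
    (hpo : IsPushout f g g' f') (hf : IsM f) : IsM f' := by
  have hmodel := IsPushout.of_isColimit (StrictOrderEmbedding.isColimitPushoutCocone hf g)
  rw [← hpo.inr_isoIsPushout_inv _ _ hmodel]
  exact IsM.comp (StrictOrderEmbedding.Pushout.strictOrderEmbedding_inr hf (homFn g))
    (IsM.iso_hom (hpo.isoIsPushout _ _ hmodel).symm)
end

section
/- Pushouts along strict order embeddings in Posets are preserved by the forgetful functor to Set: if f : P₀ → P₁ is a strict order embedding and g : P₀ → P₂ is monotone, then the underlying square of functions of the poset pushout of (f, g) is a pushout in Set. -/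
/-
When `f` is an order embedding with order-convex image, the set-theoretic pushout
`C ⊔ (B ∖ f A)` already carries the pushout order: the order generated by `B`, `C` and
`f a ≈ g a` collapses no further points. Indeed a chain of comparisons needs to pass through
`A` at most once, because `f` reflects the order, and a point of `B ∖ f A` cannot lie between
two points of `f A`. This poset is a pushout in posets whose underlying square is a pushout of
sets, and pushouts are unique up to isomorphism.
-/

open CategoryTheory Limits

open Set

section StrictOrderEmbedding

variable {P P' : Type} [PartialOrder P] [PartialOrder P'] {f : P → P'}

def StrictOrderEmbedding.orderEmbedding (hf : StrictOrderEmbedding f) : P ↪o P' :=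
  .ofMapLEIff f fun x y => (hf.2.1 x y).symm

lemma StrictOrderEmbedding.ordConnected_range (hf : StrictOrderEmbedding f) :
    (range f).OrdConnected :=
  ⟨fun _ ⟨x, hx⟩ _ ⟨y, hy⟩ z hz => hf.2.2 x y z (hx ▸ hz.1) (hy ▸ hz.2)⟩

end StrictOrderEmbedding

universe u

variable {A B C : Type u} [PartialOrder A] [PartialOrder B] [PartialOrder C]

/-- The pushout of sets: `inl (f a)` is left out, being identified with `inr (g a)`. -/
def OrderPushout (f : A ↪o B) (_g : A →o C) : Type u :=
  {x : B ⊕ C // x ∉ range (Sum.inl ∘ f)}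

namespace OrderPushout

variable (f : A ↪o B) (g : A →o C)

def IsBelow (u : B ⊕ C) (a : A) : Prop := u ≤ .inl (f a) ∨ u ≤ .inr (g a)

def IsAbove (a : A) (u : B ⊕ C) : Prop := .inl (f a) ≤ u ∨ .inr (g a) ≤ u

/-- The preorder on `B ⊕ C` generated by the disjoint-sum order and `f a ≈ g a`; since `f`
reflects the order, a chain of comparisons needs to pass through `A` at most once. -/
def GlueLE (u v : B ⊕ C) : Prop :=
  u ≤ v ∨ ∃ a a', IsBelow f g u a ∧ g a ≤ g a' ∧ IsAbove f g a' v

variable {f g}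

@[simp] lemma isBelow_inl {b : B} {a : A} : IsBelow f g (.inl b) a ↔ b ≤ f a := by
  simp [IsBelow]

@[simp] lemma isBelow_inr {c : C} {a : A} : IsBelow f g (.inr c) a ↔ c ≤ g a := by
  simp [IsBelow]

@[simp] lemma isAbove_inl {b : B} {a : A} : IsAbove f g a (.inl b) ↔ f a ≤ b := by
  simp [IsAbove]

@[simp] lemma isAbove_inr {c : C} {a : A} : IsAbove f g a (.inr c) ↔ g a ≤ c := by
  simp [IsAbove]

lemma IsBelow.of_le {u v : B ⊕ C} {a : A} (huv : u ≤ v) (hv : IsBelow f g v a) :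
    IsBelow f g u a :=
  hv.imp huv.trans huv.trans

lemma IsAbove.of_le {u v : B ⊕ C} {a : A} (hu : IsAbove f g a u) (huv : u ≤ v) :
    IsAbove f g a v :=
  hu.imp (·.trans huv) (·.trans huv)

lemma le_of_isAbove_of_isBelow {u : B ⊕ C} {a a' : A} (h₁ : IsAbove f g a u)
    (h₂ : IsBelow f g u a') : g a ≤ g a' := by
  cases u with
  | inl b => exact g.monotone (f.le_iff_le.1 ((isAbove_inl.1 h₁).trans (isBelow_inl.1 h₂)))
  | inr c => exact (isAbove_inr.1 h₁).trans (isBelow_inr.1 h₂)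

lemma glueLE_refl (u : B ⊕ C) : GlueLE f g u u := Or.inl le_rfl

lemma glueLE_trans {u v w : B ⊕ C} : GlueLE f g u v → GlueLE f g v w → GlueLE f g u w := by
  rintro (huv | ⟨a, a', hu, ha, hv⟩) (hvw | ⟨b, b', hv', hb, hw⟩)
  · exact Or.inl (huv.trans hvw)
  · exact Or.inr ⟨b, b', hv'.of_le huv, hb, hw⟩
  · exact Or.inr ⟨a, a', hu, ha, hv.of_le hvw⟩
  · exact Or.inr ⟨a, b', hu, ha.trans ((le_of_isAbove_of_isBelow hv hv').trans hb), hw⟩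

lemma glueLE_inl_inr (a : A) : GlueLE f g (.inl (f a)) (.inr (g a)) :=
  Or.inr ⟨a, a, by simp, le_rfl, by simp⟩

lemma glueLE_inr_inl (a : A) : GlueLE f g (.inr (g a)) (.inl (f a)) :=
  Or.inr ⟨a, a, by simp, le_rfl, by simp⟩

lemma le_of_glueLE_inr {c c' : C} (h : GlueLE f g (.inr c) (.inr c')) : c ≤ c' := by
  obtain h | ⟨a, a', hc, ha, hc'⟩ := h
  · exact Sum.inr_le_inr_iff.1 h
  · exact (isBelow_inr.1 hc).trans (ha.trans (isAbove_inr.1 hc'))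

lemma exists_isBelow_of_glueLE {u v : B ⊕ C} {a : A} (huv : GlueLE f g u v)
    (hv : IsBelow f g v a) : ∃ a', IsBelow f g u a' := by
  obtain huv | ⟨a', -, hu, -⟩ := huv
  exacts [⟨a, hv.of_le huv⟩, ⟨a', hu⟩]

lemma exists_isAbove_of_glueLE {u v : B ⊕ C} {a : A} (huv : GlueLE f g u v)
    (hu : IsAbove f g a u) : ∃ a', IsAbove f g a' v := by
  obtain huv | ⟨-, a', -, -, hv⟩ := huv
  exacts [⟨a, hu.of_le huv⟩, ⟨a', hv⟩]

lemma exists_inr_of_isAbove_of_isBelow (hf : (range f).OrdConnected) {u : B ⊕ C}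
    (hu : u ∉ range (Sum.inl ∘ f)) {a a' : A} (h₁ : IsAbove f g a u)
    (h₂ : IsBelow f g u a') : ∃ c, u = .inr c := by
  cases u with
  | inl b =>
    obtain ⟨x, rfl⟩ := hf.out (mem_range_self a) (mem_range_self a')
      ⟨isAbove_inl.1 h₁, isBelow_inl.1 h₂⟩
    exact absurd ⟨x, rfl⟩ hu
  | inr c => exact ⟨c, rfl⟩

instance : Preorder (OrderPushout f g) where
  le u v := GlueLE f g u.1 v.1
  le_refl u := glueLE_refl u.1
  le_trans _ _ _ := glueLE_trans

/-- Both `u` and `v` then lie between images of `A`, so neither comes from `B`. -/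
lemma eq_of_isBelow_of_isAbove (hf : (range f).OrdConnected) {u v : OrderPushout f g}
    (huv : u ≤ v) (hvu : v ≤ u) {a a' : A} (hu : IsBelow f g u.1 a)
    (hv : IsAbove f g a' v.1) : u = v := by
  obtain ⟨b, hu'⟩ := exists_isAbove_of_glueLE hvu hv
  obtain ⟨b', hv'⟩ := exists_isBelow_of_glueLE hvu hu
  obtain ⟨c, hc⟩ := exists_inr_of_isAbove_of_isBelow hf u.2 hu' hu
  obtain ⟨c', hc'⟩ := exists_inr_of_isAbove_of_isBelow hf v.2 hv hv'
  have huv' : GlueLE f g (.inr c) (.inr c') := hc ▸ hc' ▸ huv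
  have hvu' : GlueLE f g (.inr c') (.inr c) := hc ▸ hc' ▸ hvu
  refine Subtype.ext ?_
  rw [hc, hc', le_antisymm (le_of_glueLE_inr huv') (le_of_glueLE_inr hvu')]

instance [Fact (range f).OrdConnected] : PartialOrder (OrderPushout f g) where
  le_antisymm u v huv hvu := by
    obtain huv' | ⟨a, a', hu, -, hv⟩ := id huv
    · obtain hvu' | ⟨a, a', hv, -, hu⟩ := id hvu
      · exact Subtype.ext (le_antisymm huv' hvu')
      · exact (eq_of_isBelow_of_isAbove Fact.out hvu huv hv hu).symm
    · exact eq_of_isBelow_of_isAbove Fact.out huv hvu hu hv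

variable (f g)

def inr : C →o OrderPushout f g where
  toFun c := ⟨.inr c, by simp⟩
  monotone' _ _ h := Or.inl (Sum.inr_le_inr_iff.2 h)

open Classical in
noncomputable def inlFun (b : B) : OrderPushout f g :=
  if h : b ∈ range f then inr f g (g h.choose) else ⟨.inl b, by simpa using h⟩

variable {f g}

lemma inlFun_apply (a : A) : inlFun f g (f a) = inr f g (g a) := by
  have h : f a ∈ range f := mem_range_self a
  simp only [inlFun, f.injective h.choose_spec]
  exact dif_pos h

lemma inlFun_of_notMem {b : B} (hb : b ∉ range f) :
    inlFun f g b = ⟨.inl b, by simpa using hb⟩ :=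
  dif_neg hb

lemma glueLE_inlFun (b : B) :
    GlueLE f g (inlFun f g b).1 (.inl b) ∧ GlueLE f g (.inl b) (inlFun f g b).1 := by
  by_cases hb : b ∈ range f
  · obtain ⟨a, rfl⟩ := hb
    rw [inlFun_apply]
    exact ⟨glueLE_inr_inl a, glueLE_inl_inr a⟩
  · rw [inlFun_of_notMem hb]
    exact ⟨glueLE_refl _, glueLE_refl _⟩

variable (f g) in
noncomputable def inl : B →o OrderPushout f g where
  toFun := inlFun f g
  monotone' b b' h := glueLE_trans (glueLE_inlFun b).1
    (glueLE_trans (Or.inl (Sum.inl_le_inl_iff.2 h)) (glueLE_inlFun b').2)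

lemma inr_injective : Function.Injective (inr f g) := fun _ _ h =>
  Sum.inr_injective (congrArg Subtype.val h)

lemma inl_apply (a : A) : inl f g (f a) = inr f g (g a) := inlFun_apply a

lemma inl_of_notMem {b : B} (hb : b ∉ range f) : (inl f g b).1 = .inl b :=
  congrArg Subtype.val (inlFun_of_notMem hb)

lemma injOn_inl : InjOn (inl f g) (range f)ᶜ := fun b hb b' hb' h => by
  simpa [inl_of_notMem hb, inl_of_notMem hb'] using congrArg Subtype.val h

lemma exists_eq_of_inr_eq_inl {c : C} {b : B} (h : inr f g c = inl f g b) :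
    ∃ a, g a = c ∧ f a = b := by
  by_cases hb : b ∈ range f
  · obtain ⟨a, rfl⟩ := hb
    exact ⟨a, inr_injective (h.trans (inl_apply a)).symm, rfl⟩
  · simpa [inr, inl_of_notMem hb] using congrArg Subtype.val h

lemma range_inr_union_range_inl : range (inr f g) ∪ range (inl f g) = univ := by
  refine eq_univ_of_forall fun ⟨u, hu⟩ => ?_
  cases u with
  | inl b => exact .inr ⟨b, Subtype.ext (inl_of_notMem (by simpa using hu))⟩
  | inr c => exact .inl ⟨c, rfl⟩

section Desc

variable {D : Type*} [Preorder D] {k₁ : B →o D} {k₂ : C →o D}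
  (hk : ∀ a, k₁ (f a) = k₂ (g a))
include hk

lemma sumElim_le_of_isBelow {u : B ⊕ C} {a : A} (hu : IsBelow f g u a) :
    Sum.elim k₁ k₂ u ≤ k₂ (g a) := by
  cases u with
  | inl b => exact (hk a).le.trans' (k₁.monotone (isBelow_inl.1 hu))
  | inr c => exact k₂.monotone (isBelow_inr.1 hu)

lemma le_sumElim_of_isAbove {u : B ⊕ C} {a : A} (hu : IsAbove f g a u) :
    k₂ (g a) ≤ Sum.elim k₁ k₂ u := by
  cases u with
  | inl b => exact (hk a).ge.trans (k₁.monotone (isAbove_inl.1 hu))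
  | inr c => exact k₂.monotone (isAbove_inr.1 hu)

lemma sumElim_le_of_glueLE {u v : B ⊕ C} (huv : GlueLE f g u v) :
    Sum.elim k₁ k₂ u ≤ Sum.elim k₁ k₂ v := by
  obtain huv | ⟨a, a', hu, ha, hv⟩ := huv
  · cases huv with
    | inl h => exact k₁.monotone h
    | inr h => exact k₂.monotone h
  · calc Sum.elim k₁ k₂ u ≤ k₂ (g a) := sumElim_le_of_isBelow hk hu
      _ ≤ k₂ (g a') := k₂.monotone ha
      _ ≤ Sum.elim k₁ k₂ v := le_sumElim_of_isAbove hk hv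

variable (k₁ k₂) in
def desc : OrderPushout f g →o D where
  toFun u := Sum.elim k₁ k₂ u.1
  monotone' _ _ := sumElim_le_of_glueLE hk

lemma desc_inl (b : B) : desc k₁ k₂ hk (inl f g b) = k₁ b := by
  by_cases hb : b ∈ range f
  · obtain ⟨a, rfl⟩ := hb
    rw [inl_apply, hk]
    rfl
  · show Sum.elim k₁ k₂ (inl f g b).1 = k₁ b
    rw [inl_of_notMem hb]
    rfl

end Desc

variable (f g)

theorem isPushout_types :
    IsPushout (TypeCat.ofHom f) (TypeCat.ofHom g) (TypeCat.ofHom (inl f g))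
      (TypeCat.ofHom (inr f g)) := by
  have : Mono (TypeCat.ofHom (inr f g)) := (mono_iff_injective _).2 inr_injective
  refine (Types.isPushout_of_isPullback_of_mono' ?_ ?_ ?_).flip
  · refine (Types.isPullback_iff _ _ _ _).2
      ⟨?_, fun _ _ h => f.injective h.2, fun _ _ h => exists_eq_of_inr_eq_inl h⟩
    ext a
    exact (inl_apply a).symm
  · exact range_inr_union_range_inl
  · exact fun b b' hb hb' => injOn_inl hb hb'

theorem isPushout_partOrd [Fact (range f).OrdConnected] :
    IsPushout (PartOrd.ofHom f.toOrderHom) (PartOrd.ofHom g) (PartOrd.ofHom (inl f g))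
      (PartOrd.ofHom (inr f g)) := by
  have w : PartOrd.ofHom f.toOrderHom ≫ PartOrd.ofHom (inl f g) =
      PartOrd.ofHom g ≫ PartOrd.ofHom (inr f g) := by
    ext a
    exact inl_apply a
  have hs (s : PushoutCocone (PartOrd.ofHom f.toOrderHom) (PartOrd.ofHom g)) (a : A) :
      s.inl.hom (f a) = s.inr.hom (g a) :=
    ConcreteCategory.congr_hom s.condition a
  refine .of_isColimit' ⟨w⟩ (PushoutCocone.IsColimit.mk w
    (fun s => PartOrd.ofHom (desc s.inl.hom s.inr.hom (hs s)))
    (fun s => ?_) (fun s => ?_) (fun s m hl hr => ?_))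
  · ext b
    exact desc_inl (hs s) b
  · rfl
  · ext u
    obtain ⟨c, rfl⟩ | ⟨b, rfl⟩ :=
      (range_inr_union_range_inl (f := f) (g := g)).symm ▸ mem_univ u
    · exact ConcreteCategory.congr_hom hr c
    · exact (ConcreteCategory.congr_hom hl b).trans (desc_inl (hs s) b).symm

end OrderPushout

/-- Pushouts along strict order embeddings in the category of posets are
preserved by the forgetful functor to sets. -/
theorem stmt_14 {P₀ P₁ P₂ P₃ : PartOrd} (f : P₀ ⟶ P₁) (g : P₀ ⟶ P₂)
    (g' : P₁ ⟶ P₃) (f' : P₂ ⟶ P₃)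
    (hpo : IsPushout f g g' f') (hf : IsM f) :
    IsPushout ((forget PartOrd).map f) ((forget PartOrd).map g)
      ((forget PartOrd).map g') ((forget PartOrd).map f') := by
  let e := hf.orderEmbedding
  have : Fact (range e).OrdConnected := ⟨hf.ordConnected_range⟩
  have hQ : IsPushout f g _ _ := OrderPushout.isPushout_partOrd e (homFn g)
  have := (hQ.preservesColimit_span_iff (F := forget PartOrd)).2
    (OrderPushout.isPushout_types e (homFn g))
  exact hpo.map (forget PartOrd)
end

section
/- Priority-enabledness is reflected by strict order embeddings on identical markings: let f = (f_P, f_T) be a morphism of priority nets where f_P is injective and marking-strict (M₁(p) = M₂(f_P(p)) for all p), f_T is a strict order embedding, pre₂ ∘ f_T = f_P^⊕ ∘ pre₁, and f_T is surjective on transitions enabled under M₂. If f_T(t) is enabled with priority under M₂, then t is enabled with priority under M₁. -/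
/-- Priority-enabledness is reflected by strict order embeddings on identical
markings: for a morphism `(f_P, f_T)` of priority nets with `f_P` injective
and marking-strict, `f_T` a strict order embedding compatible with the
pre-domain functions, and `f_T` surjective on the transitions enabled under
`M₂`, if `f_T t` is enabled with priority under `M₂` then `t` is enabled with
priority under `M₁`. -/
theorem stmt_18 {P₁ P₂ T₁ T₂ : Type} [DecidableEq P₁] [DecidableEq P₂]
    [PartialOrder T₁] [PartialOrder T₂]
    (f_P : P₁ → P₂) (f_T : T₁ → T₂)
    (pre₁ : T₁ → Multiset P₁) (pre₂ : T₂ → Multiset P₂)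
    (M₁ : Multiset P₁) (M₂ : Multiset P₂)
    (hinj : Function.Injective f_P)
    (hstrict : ∀ p : P₁, M₁.count p = M₂.count (f_P p))
    (hemb : StrictOrderEmbedding f_T)
    (hpre : ∀ t : T₁, pre₂ (f_T t) = (pre₁ t).map f_P)
    (hsurj : ∀ t₂ : T₂, pre₂ t₂ ≤ M₂ → ∃ t₁ : T₁, f_T t₁ = t₂)
    (t : T₁)
    (hen : pre₂ (f_T t) ≤ M₂ ∧ ∀ t₂ : T₂, pre₂ t₂ ≤ M₂ → t₂ ≤ f_T t) :
    pre₁ t ≤ M₁ ∧ ∀ t' : T₁, pre₁ t' ≤ M₁ → t' ≤ t := by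
  have hM : (M₁ : Multiset P₁).map f_P ≤ M₂ := by
    rw [Multiset.le_iff_count]
    intro q
    by_cases hq : ∃ p, f_P p = q
    · obtain ⟨p, rfl⟩ := hq
      rw [Multiset.count_map_eq_count' f_P _ hinj]
      exact (hstrict p).le
    · have : Multiset.count q (M₁.map f_P) = 0 := by
        rw [Multiset.count_eq_zero]
        intro hmem
        obtain ⟨p, _, hp⟩ := Multiset.mem_map.mp hmem
        exact hq ⟨p, hp⟩
      simp [this]
  have key : ∀ s : Multiset P₁, s ≤ M₁ ↔ s.map f_P ≤ M₂ := by
    intro s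
    constructor
    · intro h
      exact le_trans (Multiset.map_le_map h) hM
    · intro h
      rw [Multiset.le_iff_count]
      intro p
      have := Multiset.le_iff_count.mp h (f_P p)
      rw [Multiset.count_map_eq_count' f_P _ hinj] at this
      rw [hstrict p]
      exact this
  constructor
  · exact (key _).mpr (by rw [← hpre]; exact hen.1)
  · intro t' ht'
    have h2 : pre₂ (f_T t') ≤ M₂ := by rw [hpre]; exact (key _).mp ht'
    exact (hemb.2.1 t' t).mpr (hen.2 _ h2)
end
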